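/- arXiv:2211.10080 — 5 statements merged into one kernel-verified Lean document; each statement's English description precedes it below -/
import Mathlib

section
/- Let A be symmetric positive definite with positive diagonal, D its diagonal part, and G = I − M⁻¹A for an invertible M. Then the smoothing inequality ‖Ge‖_A² ≤ ‖e‖_A² − α (D⁻¹Ae, Ae) holds for all e if and only if α Mᵀ D⁻¹ M ⪯ M + Mᵀ − A (Loewner order). -/
/-! Put `f = M⁻¹Ae`, so that `Ae = Mf` and `Ge = e - f`. Expanding `‖e - f‖_A²` with `A`
symmetric turns `‖e‖_A² - α (D⁻¹Ae, Ae) - ‖Ge‖_A²` into the quadratic form of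
`M + Mᵀ - A - α MᵀD⁻¹M` at `f`; as `M⁻¹A` is invertible, `f` ranges over all vectors. -/

open Matrix

namespace Matrix

variable {ι R : Type*} [Fintype ι]

theorem IsSymm.transpose_mul_mul [CommSemiring R] {W : Matrix ι ι R} (hW : W.IsSymm)
    (M : Matrix ι ι R) : (Mᵀ * W * M).IsSymm := by
  simp only [IsSymm, transpose_mul, transpose_transpose, hW.eq, Matrix.mul_assoc]

theorem energy_reduction_eq [CommRing R] {A M : Matrix ι ι R} (W : Matrix ι ι R) (hA : A.IsSymm)
    (α : R) {e f : ι → R} (hf : A *ᵥ e = M *ᵥ f) :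
    e ⬝ᵥ A *ᵥ e - α * (W *ᵥ (A *ᵥ e) ⬝ᵥ A *ᵥ e) - (e - f) ⬝ᵥ A *ᵥ (e - f) =
      f ⬝ᵥ (M + Mᵀ - A - α • (Mᵀ * W * M)) *ᵥ f := by
  have hcross : e ⬝ᵥ A *ᵥ f = f ⬝ᵥ Mᵀ *ᵥ f := by
    rw [dotProduct_mulVec, ← mulVec_transpose, hA.eq, hf, dotProduct_mulVec, vecMul_transpose,
      dotProduct_comm]
  have hW : W *ᵥ (A *ᵥ e) ⬝ᵥ A *ᵥ e = f ⬝ᵥ (Mᵀ * W * M) *ᵥ f := by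
    rw [hf, ← mulVec_mulVec, ← mulVec_mulVec, dotProduct_mulVec f Mᵀ, vecMul_transpose,
      dotProduct_comm]
  rw [hW]
  simp only [sub_mulVec, add_mulVec, smul_mulVec, mulVec_sub, dotProduct_sub, sub_dotProduct,
    dotProduct_add, dotProduct_smul, smul_eq_mul, hcross]
  rw [hf]
  ring

variable [CommRing R] [PartialOrder R] [StarRing R] [TrivialStar R]

theorem IsSymm.posSemidef_iff_of_surjective {B : Matrix ι ι R} (hB : B.IsSymm)
    {T : (ι → R) → ι → R} (hT : Function.Surjective T) :
    B.PosSemidef ↔ ∀ e, 0 ≤ T e ⬝ᵥ B *ᵥ T e := by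
  simp only [posSemidef_iff_dotProduct_mulVec, isHermitian_iff_isSymm, hB, star_trivial, true_and]
  exact hT.forall

end Matrix

theorem smoothing_property_iff_loewner_general {n : ℕ} (A M : Matrix (Fin n) (Fin n) ℝ)
    (hA : A.PosDef) (hM : IsUnit M) (α : ℝ) :
    (∀ e : Fin n → ℝ,
        ((1 - M⁻¹ * A).mulVec e) ⬝ᵥ A.mulVec ((1 - M⁻¹ * A).mulVec e) ≤
          e ⬝ᵥ A.mulVec e -
            α * (((Matrix.diagonal fun i => A i i)⁻¹.mulVec (A.mulVec e)) ⬝ᵥ A.mulVec e)) ↔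
      (M + Mᵀ - A - α • (Mᵀ * (Matrix.diagonal fun i => A i i)⁻¹ * M)).PosSemidef := by
  set D := Matrix.diagonal fun i => A i i
  have hAsymm : A.IsSymm := isHermitian_iff_isSymm.mp hA.isHermitian
  have hBsymm : (M + Mᵀ - A - α • (Mᵀ * D⁻¹ * M)).IsSymm :=
    ((isSymm_add_transpose_self M).sub hAsymm).sub
      (((isSymm_diagonal _).inv.transpose_mul_mul M).smul α)
  have hstep (e : Fin n → ℝ) : (1 - M⁻¹ * A) *ᵥ e = e - (M⁻¹ * A) *ᵥ e := by
    rw [sub_mulVec, one_mulVec]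
  have hAe (e : Fin n → ℝ) : A *ᵥ e = M *ᵥ (M⁻¹ * A) *ᵥ e := by
    rw [mulVec_mulVec, ← Matrix.mul_assoc, mul_nonsing_inv _ ((isUnit_iff_isUnit_det M).mp hM),
      Matrix.one_mul]
  have hsurj : Function.Surjective ((M⁻¹ * A) *ᵥ ·) :=
    mulVec_surjective_iff_isUnit.mpr ((isUnit_nonsing_inv_iff.mpr hM).mul hA.isUnit)
  rw [hBsymm.posSemidef_iff_of_surjective hsurj]
  refine forall_congr' fun e => ?_
  rw [hstep, ← sub_nonneg, ← energy_reduction_eq D⁻¹ hAsymm α (hAe e)]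

/-- for SPD `A` with positive diagonal `D` and invertible `M`,
with `G = I − M⁻¹A`, the smoothing inequality
`‖Ge‖_A² ≤ ‖e‖_A² − α (D⁻¹Ae, Ae)` holds for all `e` iff
`α MᵀD⁻¹M ⪯ M + Mᵀ − A` in the Loewner order. -/
theorem smoothing_property_iff_loewner {n : ℕ} (A M : Matrix (Fin n) (Fin n) ℝ)
    (hA : A.PosDef) (hdiag : ∀ i, 0 < A i i) (hM : IsUnit M) (α : ℝ) :
    (∀ e : Fin n → ℝ,
        ((1 - M⁻¹ * A).mulVec e) ⬝ᵥ A.mulVec ((1 - M⁻¹ * A).mulVec e) ≤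
          e ⬝ᵥ A.mulVec e -
            α * (((Matrix.diagonal fun i => A i i)⁻¹.mulVec (A.mulVec e)) ⬝ᵥ A.mulVec e)) ↔
      (M + Mᵀ - A - α • (Mᵀ * (Matrix.diagonal fun i => A i i)⁻¹ * M)).PosSemidef :=
  smoothing_property_iff_loewner_general A M hA hM α
end

section
/- Let H₂ be the 3n×3n matrix [[D_r⁻¹A_r, 0, 0],[0, D_i⁻¹A_i, 0],[D_e⁻¹D_er, D_e⁻¹D_ei, D_e⁻¹A_e]] built from the 3T system, where D_r, D_i, D_e are the diagonal parts of A_r, A_i, A_e. If the full matrix A is strictly diagonally dominant, then ‖H₂‖_∞ ≤ 2. -/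
/-!
Entrywise, `|H₂ k j| ≤ |A k j| / A k k`: each row of `H₂` is the corresponding row of `A` divided
by its diagonal entry, except that the coupling blocks `D_erᵀ, D_eiᵀ` are dropped in the first two
block rows. Hence every absolute row sum of `H₂` is at most
`∑ j, |A k j| / A k k = 1 + ∑ j ≠ k, |A k j| / A k k < 2` by strict diagonal dominance.
-/

open Matrix Finset

section DiagonalInverse

variable {ι α : Type*} [Fintype ι] [DecidableEq ι] [Field α]

theorem inv_diagonal_of_ne_zero {d : ι → α} (h : ∀ i, d i ≠ 0) :
    (diagonal d)⁻¹ = diagonal fun i => (d i)⁻¹ := by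
  refine inv_eq_right_inv ?_
  rw [diagonal_mul_diagonal, ← diagonal_one]
  exact congrArg diagonal (funext fun i => mul_inv_cancel₀ (h i))

theorem inv_diagonal_mul_apply {d : ι → α} (h : ∀ i, d i ≠ 0) (M : Matrix ι ι α) (i j : ι) :
    ((diagonal d)⁻¹ * M) i j = (d i)⁻¹ * M i j := by
  rw [inv_diagonal_of_ne_zero h, diagonal_mul]

end DiagonalInverse

section DiagonalDominance

variable {ι : Type*} [Fintype ι] [DecidableEq ι]

theorem pos_of_sum_offDiag_abs_lt {f : ι → ℝ} {k : ι} (h : ∑ j ∈ univ \ {k}, |f j| < f k) :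
    0 < f k :=
  (sum_nonneg fun j _ => abs_nonneg (f j)).trans_lt h

theorem sum_abs_lt_two_mul_of_sum_offDiag_abs_lt (f : ι → ℝ) (k : ι)
    (h : ∑ j ∈ univ \ {k}, |f j| < f k) : ∑ j, |f j| < 2 * f k := by
  have hk : 0 < f k := pos_of_sum_offDiag_abs_lt h
  rw [← sum_sdiff (subset_univ {k}), sum_singleton, abs_of_pos hk]
  linarith

theorem sum_abs_le_two_of_abs_le_abs_div_diag (A H : Matrix ι ι ℝ) (k : ι)
    (hdd : ∑ j ∈ univ \ {k}, |A k j| < A k k) (hle : ∀ j, |H k j| ≤ |A k j| / A k k) :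
    ∑ j, |H k j| ≤ 2 := by
  have hk : 0 < A k k := pos_of_sum_offDiag_abs_lt hdd
  calc ∑ j, |H k j| ≤ ∑ j, |A k j| / A k k := sum_le_sum fun j _ => hle j
    _ = (∑ j, |A k j|) / A k k := (sum_div ..).symm
    _ ≤ 2 := (div_le_iff₀ hk).2 (sum_abs_lt_two_mul_of_sum_offDiag_abs_lt (A k) k hdd).le

end DiagonalDominance

theorem H2_inf_norm_le_two_general {n : ℕ}
    (Ar Ai Ae : Matrix (Fin n) (Fin n) ℝ) (dr di : Fin n → ℝ)
    (A : Matrix ((Fin n ⊕ Fin n) ⊕ Fin n) ((Fin n ⊕ Fin n) ⊕ Fin n) ℝ)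
    (hAdef : A = Matrix.fromBlocks (Matrix.fromBlocks Ar 0 0 Ai)
      (Matrix.fromRows (Matrix.diagonal dr)ᵀ (Matrix.diagonal di)ᵀ)
      (Matrix.fromCols (Matrix.diagonal dr) (Matrix.diagonal di)) Ae)
    (hdd : ∀ k, ∑ j ∈ Finset.univ \ {k}, |A k j| < A k k)
    (H₂ : Matrix ((Fin n ⊕ Fin n) ⊕ Fin n) ((Fin n ⊕ Fin n) ⊕ Fin n) ℝ)
    (hH₂ : H₂ = Matrix.fromBlocks
      (Matrix.fromBlocks ((Matrix.diagonal fun k => Ar k k)⁻¹ * Ar) 0 0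
        ((Matrix.diagonal fun k => Ai k k)⁻¹ * Ai)) 0
      (Matrix.fromCols ((Matrix.diagonal fun k => Ae k k)⁻¹ * Matrix.diagonal dr)
        ((Matrix.diagonal fun k => Ae k k)⁻¹ * Matrix.diagonal di))
      ((Matrix.diagonal fun k => Ae k k)⁻¹ * Ae)) :
    ∀ k, ∑ j, |H₂ k j| ≤ 2 := by
  have hdiag : ∀ k, 0 < A k k := fun k => pos_of_sum_offDiag_abs_lt (hdd k)
  have hr : ∀ k, 0 < Ar k k := fun k => by simpa [hAdef] using hdiag (.inl (.inl k))
  have hi : ∀ k, 0 < Ai k k := fun k => by simpa [hAdef] using hdiag (.inl (.inr k))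
  have he : ∀ k, 0 < Ae k k := fun k => by simpa [hAdef] using hdiag (.inr k)
  intro k
  refine sum_abs_le_two_of_abs_le_abs_div_diag A H₂ k (hdd k) fun j => ?_
  subst hAdef hH₂
  rcases k with (k | k) | k <;> rcases j with (j | j) | j <;>
    simp [inv_diagonal_mul_apply fun k => (hr k).ne', inv_diagonal_mul_apply fun k => (hi k).ne',
      inv_diagonal_mul_apply fun k => (he k).ne', abs_mul, abs_of_pos, hr, hi, he, div_eq_inv_mul]

/-- for the 3T system, the matrix
`H₂ = [[Dr⁻¹Ar,0,0],[0,Di⁻¹Ai,0],[De⁻¹Der, De⁻¹Dei, De⁻¹Ae]]` (with `Dr, Di, De`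
the diagonal parts of `Ar, Ai, Ae`) satisfies `‖H₂‖_∞ ≤ 2` whenever the full
matrix `A` is strictly diagonally dominant (with positive diagonal). -/
theorem H2_inf_norm_le_two {n : ℕ}
    (Ar Ai Ae : Matrix (Fin n) (Fin n) ℝ) (dr di : Fin n → ℝ)
    (A : Matrix ((Fin n ⊕ Fin n) ⊕ Fin n) ((Fin n ⊕ Fin n) ⊕ Fin n) ℝ)
    (hAdef : A = Matrix.fromBlocks (Matrix.fromBlocks Ar 0 0 Ai)
      (Matrix.fromRows (Matrix.diagonal dr)ᵀ (Matrix.diagonal di)ᵀ)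
      (Matrix.fromCols (Matrix.diagonal dr) (Matrix.diagonal di)) Ae)
    (hpos : ∀ k, 0 < A k k)
    (hdd : ∀ k, ∑ j ∈ Finset.univ \ {k}, |A k j| < A k k)
    (H₂ : Matrix ((Fin n ⊕ Fin n) ⊕ Fin n) ((Fin n ⊕ Fin n) ⊕ Fin n) ℝ)
    (hH₂ : H₂ = Matrix.fromBlocks
      (Matrix.fromBlocks ((Matrix.diagonal fun k => Ar k k)⁻¹ * Ar) 0 0
        ((Matrix.diagonal fun k => Ai k k)⁻¹ * Ai)) 0
      (Matrix.fromCols ((Matrix.diagonal fun k => Ae k k)⁻¹ * Matrix.diagonal dr)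
        ((Matrix.diagonal fun k => Ae k k)⁻¹ * Matrix.diagonal di))
      ((Matrix.diagonal fun k => Ae k k)⁻¹ * Ae)) :
    ∀ k, ∑ j, |H₂ k j| ≤ 2 :=
  H2_inf_norm_le_two_general Ar Ai Ae dr di A hAdef hdd H₂ hH₂
end

section
/- Let A_r be an n×n M-matrix and D_er = diag(d_1,…,d_n) with d_j ≤ 0, such that the augmented rows satisfy Σ_j a_{kj} + d_k > 0 (strict diagonal dominance of the 3T matrix). Then every row of the matrix H₁ = [[I, 0, A_r⁻¹D_erᵀ],[0, I, A_i⁻¹D_eiᵀ],[0, 0, I]] has absolute row sum at most 2, i.e., ‖H₁‖_∞ ≤ 2, where A_i, D_ei satisfy the analogous hypotheses. -/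
/-!
Apart from identity blocks, a row of `H₁` carries a row of `A⁻¹ D` with `A = A_r` or `A_i`.
Since `A⁻¹ ≥ 0` and `-d_j ≤ ∑_l a_{jl}`, its absolute row sum is at most the corresponding row
sum of `A⁻¹ A = I`, which is `1`.
-/

open Matrix Finset

theorem sum_inv_mul_rowSum_eq_one {ι R : Type*} [Fintype ι] [DecidableEq ι] [CommRing R]
    {A : Matrix ι ι R} (hA : IsUnit A) (i : ι) : ∑ j, A⁻¹ i j * ∑ l, A j l = 1 := by
  have hinv : A⁻¹ * A = 1 := nonsing_inv_mul A ((isUnit_iff_isUnit_det A).mp hA)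
  calc ∑ j, A⁻¹ i j * ∑ l, A j l = (A⁻¹ *ᵥ A *ᵥ fun _ => 1) i := by
        simp [mulVec, dotProduct]
    _ = 1 := by simp [mulVec_mulVec, hinv]

section AbsRowSums

variable {ι R : Type*} [Fintype ι] [DecidableEq ι] [Field R] [LinearOrder R]
  [IsStrictOrderedRing R]

theorem sum_abs_inv_mul_diagonal_le_one {A : Matrix ι ι R} {d : ι → R} (hA : IsUnit A)
    (hinv : ∀ k j, 0 ≤ A⁻¹ k j) (hd : ∀ k, d k ≤ 0) (hs : ∀ k, 0 < (∑ j, A k j) + d k)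
    (i : ι) : ∑ j, |(A⁻¹ * (diagonal d)ᵀ) i j| ≤ 1 := by
  calc ∑ j, |(A⁻¹ * (diagonal d)ᵀ) i j| = ∑ j, A⁻¹ i j * -d j := by
        simp only [diagonal_transpose, mul_diagonal, abs_mul, abs_of_nonneg (hinv _ _),
          abs_of_nonpos (hd _)]
    _ ≤ ∑ j, A⁻¹ i j * ∑ l, A j l :=
        sum_le_sum fun j _ => mul_le_mul_of_nonneg_left (by linarith [hs j]) (hinv i j)
    _ = 1 := sum_inv_mul_rowSum_eq_one hA i

theorem sum_abs_one_apply (i : ι) : ∑ j, |(1 : Matrix ι ι R) i j| = 1 := by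
  simp [one_apply, apply_ite]

end AbsRowSums

section BlockRowSums

variable {ι κ α : Type*} [Fintype ι] [Fintype κ] [AddCommGroup α] [Lattice α]

theorem sum_abs_fromBlocks_apply_inl (A : Matrix ι ι α) (B : Matrix ι κ α) (C : Matrix κ ι α)
    (D : Matrix κ κ α) (i : ι) :
    ∑ j, |fromBlocks A B C D (.inl i) j| = ∑ j, |A i j| + ∑ j, |B i j| := by
  simp [Fintype.sum_sum_type]

theorem sum_abs_fromBlocks_apply_inr (A : Matrix ι ι α) (B : Matrix ι κ α) (C : Matrix κ ι α)
    (D : Matrix κ κ α) (i : κ) :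
    ∑ j, |fromBlocks A B C D (.inr i) j| = ∑ j, |C i j| + ∑ j, |D i j| := by
  simp [Fintype.sum_sum_type]

end BlockRowSums

/-- for M-matrices `Ar, Ai` with nonnegative inverses and diagonal
coupling matrices `Der = diagonal dr`, `Dei = diagonal di` with nonpositive
entries, if the augmented rows satisfy `Σ_j Ar k j + dr k > 0` and
`Σ_j Ai k j + di k > 0`, then every row of
`H₁ = [[I, 0, Ar⁻¹Derᵀ],[0, I, Ai⁻¹Deiᵀ],[0,0,I]]` has absolute row sum at most
`2`, i.e. `‖H₁‖_∞ ≤ 2`. -/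
theorem H1_inf_norm_le_two {n : ℕ}
    (Ar Ai : Matrix (Fin n) (Fin n) ℝ) (dr di : Fin n → ℝ)
    (hArM : (∀ k, 0 < Ar k k) ∧ (∀ k j, k ≠ j → Ar k j ≤ 0) ∧ ∀ k j, 0 ≤ Ar⁻¹ k j)
    (hAiM : (∀ k, 0 < Ai k k) ∧ (∀ k j, k ≠ j → Ai k j ≤ 0) ∧ ∀ k j, 0 ≤ Ai⁻¹ k j)
    (hArU : IsUnit Ar) (hAiU : IsUnit Ai)
    (hdr : ∀ k, dr k ≤ 0) (hdi : ∀ k, di k ≤ 0)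
    (hsr : ∀ k, 0 < (∑ j, Ar k j) + dr k)
    (hsi : ∀ k, 0 < (∑ j, Ai k j) + di k)
    (H₁ : Matrix ((Fin n ⊕ Fin n) ⊕ Fin n) ((Fin n ⊕ Fin n) ⊕ Fin n) ℝ)
    (hH₁ : H₁ = Matrix.fromBlocks (Matrix.fromBlocks 1 0 0 1)
      (Matrix.fromRows (Ar⁻¹ * (Matrix.diagonal dr)ᵀ) (Ai⁻¹ * (Matrix.diagonal di)ᵀ)) 0 1) :
    ∀ k, ∑ j, |H₁ k j| ≤ 2 := by
  subst hH₁
  rintro ((i | i) | i)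
  · simp only [sum_abs_fromBlocks_apply_inl, fromRows_apply_inl, sum_abs_one_apply,
      Matrix.zero_apply, abs_zero, sum_const_zero]
    linarith [sum_abs_inv_mul_diagonal_le_one hArU hArM.2.2 hdr hsr i]
  · simp only [sum_abs_fromBlocks_apply_inl, sum_abs_fromBlocks_apply_inr, fromRows_apply_inr,
      sum_abs_one_apply, Matrix.zero_apply, abs_zero, sum_const_zero]
    linarith [sum_abs_inv_mul_diagonal_le_one hAiU hAiM.2.2 hdi hsi i]
  · simp only [sum_abs_fromBlocks_apply_inr, sum_abs_one_apply, Matrix.zero_apply, abs_zero,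
      sum_const_zero]
    norm_num
end

section
/- For the PCTL algorithm applied to the 3T system with the diagonal interpolation P = [P_r; P_i; I] defined by (P_α)_{kk} = −Σ_j b^α_{kj} d^α_j (α = r, i), the weak approximation inequality ‖e_F − P_FC e_C‖_{0,F}² ≤ β‖e‖_A² holds with β = max over rows of the explicit quantities m_k built from a^α_{kk}, the partial sums Σ_j b^α_{kj} d^α_j, the row sums s_k of A, and the coupling entries d^r_k, d^i_k; in particular it suffices that the matrix Q := βA − Lᵀ D_F L is weakly diagonally dominant with nonnegative diagonal, where L = [I, 0, −P_r; 0, I, −P_i] and D_F = diag(D_r, D_i). -/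
/-!
The weak approximation inequality `‖e_F − P_FC e_C‖²_{0,F} ≤ β ‖e‖²_A` says
`eᵀ (Lᵀ D_F L) e ≤ β eᵀ A e`, i.e. that `Q = βA − Lᵀ D_F L` is positive semidefinite; by
Gershgorin this holds as soon as the symmetric matrix `Q` is weakly diagonally dominant.
Since the interpolation is diagonal, `Lᵀ D_F L` has the same arrowhead block shape as `A`, and
so does `Q`. As `A` is a Z-matrix, strict diagonal dominance of `A` means positive row sums
`s_k`, and `B ≥ 0` with `B (A_α 1 + d) = 1 + B d` puts the weights `P_k` in `[0, 1]`.
Row by row, diagonal dominance of `Q` then amounts to the bounds `m_k ≤ β`: each row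
of `Q` has one (fine rows) or two (coarse rows) entries of unknown sign, and the two
resp. four sign patterns give the terms of the maximum defining `m_k`; in the coarse row the
pattern with both signs negative holds automatically because `P_k² ≤ P_k`.
-/

open Matrix Finset

theorem Matrix.IsHermitian.posSemidef_of_sum_abs_offDiag_le {m : Type*} [Fintype m]
    [DecidableEq m] {Q : Matrix m m ℝ} (hQ : Q.IsHermitian)
    (hdd : ∀ k, ∑ j ∈ univ \ {k}, |Q k j| ≤ Q k k) : Q.PosSemidef := by
  rw [hQ.posSemidef_iff_eigenvalues_nonneg]
  intro i
  have hμ : Module.End.HasEigenvalue (toLin' Q) (hQ.eigenvalues i) :=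
    .of_mem_spectrum (by rw [spectrum_toLin']; exact hQ.eigenvalues_mem_spectrum_real i)
  obtain ⟨k, hk⟩ := eigenvalue_mem_ball hμ
  rw [Metric.mem_closedBall, Real.dist_eq, abs_le] at hk
  simp only [Real.norm_eq_abs, ← sdiff_singleton_eq_erase] at hk
  exact (show (0 : ℝ) ≤ _ by linarith [hk.1, hdd k])

theorem Matrix.dotProduct_mulVec_le_of_sum_abs_offDiag_le {m : Type*} [Fintype m]
    [DecidableEq m] {A M : Matrix m m ℝ} (hA : A.IsHermitian) (hM : M.IsHermitian) {c : ℝ}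
    (hdd : ∀ k, ∑ j ∈ univ \ {k}, |(c • A - M) k j| ≤ (c • A - M) k k) (x : m → ℝ) :
    x ⬝ᵥ M *ᵥ x ≤ c * (x ⬝ᵥ A *ᵥ x) := by
  have hQ := ((hA.smul (IsSelfAdjoint.all c)).sub hM).posSemidef_of_sum_abs_offDiag_le hdd
  have := hQ.dotProduct_mulVec_nonneg x
  rw [star_trivial, sub_mulVec, dotProduct_sub, smul_mulVec, dotProduct_smul, smul_eq_mul] at this
  linarith

theorem Matrix.dotProduct_transpose_mul_diagonal_mul_mulVec {m n : Type*} [Fintype m]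
    [Fintype n] [DecidableEq n] (L : Matrix n m ℝ) (w : n → ℝ) (x : m → ℝ) :
    x ⬝ᵥ (Lᵀ * diagonal w * L) *ᵥ x = ∑ i, w i * (L *ᵥ x) i ^ 2 := by
  rw [← mulVec_mulVec, ← mulVec_mulVec, dotProduct_mulVec, vecMul_transpose, dotProduct]
  simp only [mulVec_diagonal]
  exact sum_congr rfl fun i _ => by ring

theorem fine_bound_of_max_div_le {a s d P c : ℝ} (ha : 0 < a) (hd : d < 0) (hs : 0 < s)
    (hP : 0 ≤ P) (hc : max (a * (1 - P) / s) (a * (1 + P) / (s - 2 * d)) ≤ c) :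
    0 < c ∧ |c * d + a * P| ≤ c * (s - d) - a := by
  rw [max_le_iff, div_le_iff₀ hs, div_le_iff₀ (by linarith)] at hc
  have hc0 : 0 < c := pos_of_mul_pos_left (by nlinarith) (by linarith : 0 ≤ s - 2 * d)
  exact ⟨hc0, abs_le.mpr ⟨by linarith, by linarith⟩⟩

theorem coarse_bound_of_max_div_le {dr di s a b P P' c : ℝ} (hdr : dr < 0) (hdi : di < 0)
    (hs : 0 < s) (ha : 0 ≤ a) (hb : 0 ≤ b) (hP : P ∈ Set.Icc 0 1) (hP' : P' ∈ Set.Icc 0 1)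
    (hc : 0 ≤ c)
    (hm : max (max ((a * (P ^ 2 + P) + b * (P' ^ 2 + P')) / (s - 2 * dr - 2 * di))
      ((a * (P ^ 2 - P) + b * (P' ^ 2 + P')) / (s - 2 * di)))
      ((a * (P ^ 2 + P) + b * (P' ^ 2 - P')) / (s - 2 * dr)) ≤ c) :
    |c * dr + a * P| + |c * di + b * P'| ≤ c * (s - dr - di) - (a * P ^ 2 + b * P' ^ 2) := by
  simp only [max_le_iff] at hm
  obtain ⟨⟨h₁, h₂⟩, h₃⟩ := hm
  rw [div_le_iff₀ (by linarith)] at h₁ h₂ h₃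
  have hPP : a * (P ^ 2 - P) ≤ 0 :=
    mul_nonpos_of_nonneg_of_nonpos ha (by nlinarith [hP.1, hP.2])
  have hPP' : b * (P' ^ 2 - P') ≤ 0 :=
    mul_nonpos_of_nonneg_of_nonpos hb (by nlinarith [hP'.1, hP'.2])
  have h₄ : 0 ≤ c * s := mul_nonneg hc hs.le
  rcases abs_cases (c * dr + a * P) with ⟨hx, _⟩ | ⟨hx, _⟩ <;>
    rcases abs_cases (c * di + b * P') with ⟨hy, _⟩ | ⟨hy, _⟩ <;>
    rw [hx, hy] <;> nlinarith

section ZMatrix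

variable {ι : Type*} [Fintype ι] [DecidableEq ι]

theorem sum_abs_offDiag_eq_of_nonpos {M : Matrix ι ι ℝ} {k : ι}
    (hM : ∀ j, k ≠ j → M k j ≤ 0) : ∑ j ∈ univ \ {k}, |M k j| = M k k - ∑ j, M k j := by
  rw [sum_congr rfl fun j hj => abs_of_nonpos (hM j (by simpa [eq_comm] using hj)),
    sum_neg_distrib, sdiff_singleton_eq_erase, sum_erase_eq_sub (mem_univ k)]
  ring

theorem sum_abs_offDiag_smul_sub_diagonal {M : Matrix ι ι ℝ} {k : ι}
    (hM : ∀ j, k ≠ j → M k j ≤ 0) {c : ℝ} (hc : 0 ≤ c) (t : ι → ℝ) :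
    ∑ j ∈ univ \ {k}, |(c • M - diagonal t) k j| = c * (M k k - ∑ j, M k j) := by
  have hoff : ∀ j ∈ univ \ {k}, |(c • M - diagonal t) k j| = c * |M k j| := fun j hj => by
    have hkj : k ≠ j := by simpa [eq_comm] using hj
    rw [Matrix.sub_apply, diagonal_apply_ne _ hkj, sub_zero, Matrix.smul_apply, smul_eq_mul,
      abs_mul, abs_of_nonneg hc]
  rw [sum_congr rfl hoff, ← mul_sum, sum_abs_offDiag_eq_of_nonpos hM]

theorem neg_sum_inv_mul_mem_Icc {M : Matrix ι ι ℝ} (hM : IsUnit M) (hB : ∀ k j, 0 ≤ M⁻¹ k j)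
    {d : ι → ℝ} (hd : ∀ j, d j ≤ 0) (hs : ∀ j, 0 ≤ ∑ l, M j l + d j) (k : ι) :
    -∑ j, M⁻¹ k j * d j ∈ Set.Icc 0 1 := by
  have hcancel : M⁻¹ *ᵥ (M *ᵥ 1 + d) = 1 + M⁻¹ *ᵥ d := by
    rw [mulVec_add, mulVec_mulVec, nonsing_inv_mul _ ((isUnit_iff_isUnit_det M).mp hM),
      one_mulVec]
  have hk := congrFun hcancel k
  simp only [mulVec, dotProduct, Pi.add_apply, Pi.one_apply, mul_one] at hk
  have hlow : 0 ≤ ∑ j, M⁻¹ k j * (∑ l, M j l + d j) :=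
    sum_nonneg fun j _ => mul_nonneg (hB k j) (hs j)
  have hup : ∑ j, M⁻¹ k j * d j ≤ 0 :=
    sum_nonpos fun j _ => mul_nonpos_of_nonneg_of_nonpos (hB k j) (hd j)
  constructor <;> linarith

theorem fine_row_sum_abs_offDiag_le {M : Matrix ι ι ℝ} {k : ι} (hMk : 0 < M k k)
    (hM : ∀ j, k ≠ j → M k j ≤ 0) {d P c : ℝ} (hd : d < 0) (hs : 0 < ∑ j, M k j + d)
    (hP : 0 ≤ P)
    (hc : max (M k k * (1 - P) / (∑ j, M k j + d))
      (M k k * (1 + P) / (∑ j, M k j + d - 2 * d)) ≤ c) :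
    ∑ j ∈ univ \ {k}, |(c • M - diagonal fun i => M i i) k j| + |c * d + M k k * P| ≤
      (c • M - diagonal fun i => M i i) k k := by
  obtain ⟨hc0, hbound⟩ := fine_bound_of_max_div_le hMk hd hs hP hc
  rw [sum_abs_offDiag_smul_sub_diagonal hM hc0.le]
  simp only [Matrix.sub_apply, Matrix.smul_apply, diagonal_apply_eq, smul_eq_mul]
  linarith

theorem coarse_row_sum_abs_offDiag_le {W : Matrix ι ι ℝ} {k : ι} (hW : ∀ j, k ≠ j → W k j ≤ 0)
    {dr di a b P P' c : ℝ} (hdr : dr < 0) (hdi : di < 0) (hs : 0 < dr + di + ∑ j, W k j)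
    (ha : 0 ≤ a) (hb : 0 ≤ b) (hP : P ∈ Set.Icc 0 1) (hP' : P' ∈ Set.Icc 0 1) (hc : 0 ≤ c)
    (hm : max (max
      ((a * (P ^ 2 + P) + b * (P' ^ 2 + P')) / (dr + di + ∑ j, W k j - 2 * dr - 2 * di))
      ((a * (P ^ 2 - P) + b * (P' ^ 2 + P')) / (dr + di + ∑ j, W k j - 2 * di)))
      ((a * (P ^ 2 + P) + b * (P' ^ 2 - P')) / (dr + di + ∑ j, W k j - 2 * dr)) ≤ c)
    {t : ι → ℝ} (ht : t k = a * P ^ 2 + b * P' ^ 2) :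
    |c * dr + a * P| + |c * di + b * P'| + ∑ j ∈ univ \ {k}, |(c • W - diagonal t) k j| ≤
      (c • W - diagonal t) k k := by
  rw [sum_abs_offDiag_smul_sub_diagonal hW hc]
  simp only [Matrix.sub_apply, Matrix.smul_apply, diagonal_apply_eq, smul_eq_mul, ht]
  have := coarse_bound_of_max_div_le hdr hdi hs ha hb hP hP' hc hm
  linarith

end ZMatrix

section Arrowhead

variable {ι R : Type*} [DecidableEq ι]

def arrowhead [Zero R] (X Y W : Matrix ι ι R) (u v : ι → R) :
    Matrix ((ι ⊕ ι) ⊕ ι) ((ι ⊕ ι) ⊕ ι) R :=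
  fromBlocks (fromBlocks X 0 0 Y) (fromRows (diagonal u) (diagonal v))
    (fromCols (diagonal u) (diagonal v)) W

/-- The map `e ↦ e_F − P_FC e_C` for the interpolation `P = [diagonal P; diagonal P'; 1]`. -/
def fineError [Ring R] (P P' : ι → R) : Matrix (ι ⊕ ι) ((ι ⊕ ι) ⊕ ι) R :=
  fromCols (fromBlocks 1 0 0 1) (fromRows (-(diagonal P)) (-(diagonal P')))

theorem smul_arrowhead_sub_arrowhead (c : ℝ) (X Y W X' Y' W' : Matrix ι ι ℝ)
    (u v u' v' : ι → ℝ) :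
    c • arrowhead X Y W u v - arrowhead X' Y' W' u' v' =
      arrowhead (c • X - X') (c • Y - Y') (c • W - W') (c • u - u') (c • v - v') := by
  ext ((i | i) | i) ((j | j) | j) <;> by_cases h : i = j <;> simp [arrowhead, h]

variable [Fintype ι]

theorem sum_abs_offDiag_arrowhead_inl_inl (X Y W : Matrix ι ι ℝ) (u v : ι → ℝ) (k : ι) :
    ∑ q ∈ univ \ {Sum.inl (Sum.inl k)}, |arrowhead X Y W u v (Sum.inl (Sum.inl k)) q| =
      ∑ j ∈ univ \ {k}, |X k j| + |u k| := by
  simp [sdiff_singleton_eq_erase, sum_erase_eq_sub, Fintype.sum_sum_type, arrowhead,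
    diagonal_apply, apply_ite abs]
  ring

theorem sum_abs_offDiag_arrowhead_inl_inr (X Y W : Matrix ι ι ℝ) (u v : ι → ℝ) (k : ι) :
    ∑ q ∈ univ \ {Sum.inl (Sum.inr k)}, |arrowhead X Y W u v (Sum.inl (Sum.inr k)) q| =
      ∑ j ∈ univ \ {k}, |Y k j| + |v k| := by
  simp [sdiff_singleton_eq_erase, sum_erase_eq_sub, Fintype.sum_sum_type, arrowhead,
    diagonal_apply, apply_ite abs]
  ring

theorem sum_abs_offDiag_arrowhead_inr (X Y W : Matrix ι ι ℝ) (u v : ι → ℝ) (k : ι) :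
    ∑ q ∈ univ \ {Sum.inr k}, |arrowhead X Y W u v (Sum.inr k) q| =
      |u k| + |v k| + ∑ j ∈ univ \ {k}, |W k j| := by
  simp [sdiff_singleton_eq_erase, sum_erase_eq_sub, Fintype.sum_sum_type, arrowhead,
    diagonal_apply, apply_ite abs]
  ring

theorem arrowhead_sum_abs_offDiag_le {X Y W : Matrix ι ι ℝ} {u v : ι → ℝ}
    (hX : ∀ k, ∑ j ∈ univ \ {k}, |X k j| + |u k| ≤ X k k)
    (hY : ∀ k, ∑ j ∈ univ \ {k}, |Y k j| + |v k| ≤ Y k k)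
    (hW : ∀ k, |u k| + |v k| + ∑ j ∈ univ \ {k}, |W k j| ≤ W k k) (p : (ι ⊕ ι) ⊕ ι) :
    ∑ q ∈ univ \ {p}, |arrowhead X Y W u v p q| ≤ arrowhead X Y W u v p p := by
  rcases p with (k | k) | k
  · rw [sum_abs_offDiag_arrowhead_inl_inl]; exact hX k
  · rw [sum_abs_offDiag_arrowhead_inl_inr]; exact hY k
  · rw [sum_abs_offDiag_arrowhead_inr]; exact hW k

theorem arrowhead_rowSum_pos {X Y W : Matrix ι ι ℝ} {u v : ι → ℝ}
    (hX : ∀ k j, k ≠ j → X k j ≤ 0) (hY : ∀ k j, k ≠ j → Y k j ≤ 0)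
    (hW : ∀ k j, k ≠ j → W k j ≤ 0) (hu : ∀ k, u k ≤ 0) (hv : ∀ k, v k ≤ 0)
    (hdd : ∀ p, ∑ q ∈ univ \ {p}, |arrowhead X Y W u v p q| < arrowhead X Y W u v p p)
    (k : ι) :
    0 < ∑ j, X k j + u k ∧ 0 < ∑ j, Y k j + v k ∧ 0 < u k + v k + ∑ j, W k j := by
  have hr := hdd (.inl (.inl k))
  have hi := hdd (.inl (.inr k))
  have he := hdd (.inr k)
  rw [sum_abs_offDiag_arrowhead_inl_inl, sum_abs_offDiag_eq_of_nonpos (hX k),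
    abs_of_nonpos (hu k)] at hr
  rw [sum_abs_offDiag_arrowhead_inl_inr, sum_abs_offDiag_eq_of_nonpos (hY k),
    abs_of_nonpos (hv k)] at hi
  rw [sum_abs_offDiag_arrowhead_inr, sum_abs_offDiag_eq_of_nonpos (hW k),
    abs_of_nonpos (hu k), abs_of_nonpos (hv k)] at he
  simp only [arrowhead, fromBlocks_apply₁₁, fromBlocks_apply₂₂] at hr hi he
  exact ⟨by linarith, by linarith, by linarith⟩

theorem fineError_mulVec (P P' er ei ee : ι → ℝ) :
    fineError P P' *ᵥ Sum.elim (Sum.elim er ei) ee =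
      Sum.elim (fun k => er k - P k * ee k) (fun k => ei k - P' k * ee k) := by
  ext (k | k) <;> simp [fineError, mulVec, dotProduct, Fintype.sum_sum_type, one_apply,
    diagonal_apply, sub_eq_add_neg]

theorem fineError_transpose_mul_diagonal_mul (P P' a a' : ι → ℝ) :
    (fineError P P')ᵀ * diagonal (Sum.elim a a') * fineError P P' =
      arrowhead (diagonal a) (diagonal a') (diagonal (a * P ^ 2 + a' * P' ^ 2))
        (-(a * P)) (-(a' * P')) := by
  ext ((i | i) | i) ((j | j) | j) <;> by_cases h : i = j <;>
    simp [fineError, arrowhead, mul_apply, Fintype.sum_sum_type, one_apply, diagonal_apply, h,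
      eq_comm (a := j)] <;> ring

theorem smul_arrowhead_sub_fineError_transpose_mul_diagonal_mul (c : ℝ) (X Y W : Matrix ι ι ℝ)
    (u v P P' : ι → ℝ) :
    c • arrowhead X Y W u v -
        (fineError P P')ᵀ * diagonal (Sum.elim (fun k => X k k) fun k => Y k k) *
          fineError P P' =
      arrowhead (c • X - diagonal fun k => X k k) (c • Y - diagonal fun k => Y k k)
        (c • W - diagonal fun k => X k k * P k ^ 2 + Y k k * P' k ^ 2)
        (fun k => c * u k + X k k * P k) (fun k => c * v k + Y k k * P' k) := by
  rw [fineError_transpose_mul_diagonal_mul, smul_arrowhead_sub_arrowhead]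
  congr <;> ext <;> simp

theorem weak_approximation_of_sum_abs_offDiag_le {A : Matrix ((ι ⊕ ι) ⊕ ι) ((ι ⊕ ι) ⊕ ι) ℝ}
    (hA : A.IsHermitian) {P P' a a' : ι → ℝ} {c : ℝ}
    (hdd : ∀ p, ∑ q ∈ univ \ {p},
      |(c • A - (fineError P P')ᵀ * diagonal (Sum.elim a a') * fineError P P') p q| ≤
        (c • A - (fineError P P')ᵀ * diagonal (Sum.elim a a') * fineError P P') p p)
    (er ei ee : ι → ℝ) :
    ∑ k, a k * (er k - P k * ee k) ^ 2 + ∑ k, a' k * (ei k - P' k * ee k) ^ 2 ≤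
      c * (Sum.elim (Sum.elim er ei) ee ⬝ᵥ A *ᵥ Sum.elim (Sum.elim er ei) ee) := by
  have hM : ((fineError P P')ᵀ * diagonal (Sum.elim a a') * fineError P P').IsHermitian := by
    simpa [conjTranspose_eq_transpose_of_trivial] using
      isHermitian_conjTranspose_mul_mul (fineError P P') (isHermitian_diagonal (Sum.elim a a'))
  have := dotProduct_mulVec_le_of_sum_abs_offDiag_le hA hM hdd (Sum.elim (Sum.elim er ei) ee)
  rwa [dotProduct_transpose_mul_diagonal_mul_mulVec, fineError_mulVec, Fintype.sum_sum_type]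
    at this

end Arrowhead

/-- for the PCTL algorithm applied to the 3T system with diagonal
interpolation `P = [Pr; Pi; I]`, `(Pα)_{kk} = −Σ_j bα_{kj} dα_j`, the weak
approximation inequality `‖e_F − P_FC e_C‖_{0,F}² ≤ β‖e‖_A²` holds with
`β = max_k m_k` (the explicit row quantities); in particular it suffices that
`Q := β'A − LᵀD_F L` be weakly diagonally dominant with nonnegative diagonal. -/
theorem pctl_weak_approximation {n : ℕ}
    (Ar Ai Ae : Matrix (Fin n) (Fin n) ℝ) (dr di : Fin n → ℝ)
    (hArM : (∀ k, 0 < Ar k k) ∧ (∀ k j, k ≠ j → Ar k j ≤ 0) ∧ ∀ k j, 0 ≤ Ar⁻¹ k j)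
    (hAiM : (∀ k, 0 < Ai k k) ∧ (∀ k j, k ≠ j → Ai k j ≤ 0) ∧ ∀ k j, 0 ≤ Ai⁻¹ k j)
    (hAeM : (∀ k, 0 < Ae k k) ∧ (∀ k j, k ≠ j → Ae k j ≤ 0) ∧ ∀ k j, 0 ≤ Ae⁻¹ k j)
    (hArU : IsUnit Ar) (hAiU : IsUnit Ai)
    (hdr : ∀ k, dr k < 0) (hdi : ∀ k, di k < 0)
    (A : Matrix ((Fin n ⊕ Fin n) ⊕ Fin n) ((Fin n ⊕ Fin n) ⊕ Fin n) ℝ)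
    (hAdef : A = Matrix.fromBlocks (Matrix.fromBlocks Ar 0 0 Ai)
      (Matrix.fromRows (Matrix.diagonal dr)ᵀ (Matrix.diagonal di)ᵀ)
      (Matrix.fromCols (Matrix.diagonal dr) (Matrix.diagonal di)) Ae)
    (hApd : A.PosDef)
    (hdd : ∀ k, ∑ j ∈ Finset.univ \ {k}, |A k j| < A k k)
    -- the interpolation weights `Pα k = −Σ_j bα_{kj} dα_j`
    (Pr Pi : Fin n → ℝ)
    (hPr : ∀ k, Pr k = -∑ j, Ar⁻¹ k j * dr j)
    (hPi : ∀ k, Pi k = -∑ j, Ai⁻¹ k j * di j)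
    -- the augmented row sums of `A`
    (sr si se : Fin n → ℝ)
    (hsr : ∀ k, sr k = (∑ j, Ar k j) + dr k)
    (hsi : ∀ k, si k = (∑ j, Ai k j) + di k)
    (hse : ∀ k, se k = dr k + di k + ∑ j, Ae k j)
    -- the explicit row bounds `m_k`
    (mr mi me : Fin n → ℝ)
    (hmr : ∀ k, mr k = max (Ar k k * (1 + ∑ j, Ar⁻¹ k j * dr j) / sr k)
      (Ar k k * (1 - ∑ j, Ar⁻¹ k j * dr j) / (sr k - 2 * dr k)))
    (hmi : ∀ k, mi k = max (Ai k k * (1 + ∑ j, Ai⁻¹ k j * di j) / si k)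
      (Ai k k * (1 - ∑ j, Ai⁻¹ k j * di j) / (si k - 2 * di k)))
    (hme : ∀ k, me k = max (max
      ((Ar k k * ((∑ j, Ar⁻¹ k j * dr j) ^ 2 - ∑ j, Ar⁻¹ k j * dr j) +
        Ai k k * ((∑ j, Ai⁻¹ k j * di j) ^ 2 - ∑ j, Ai⁻¹ k j * di j)) /
          (se k - 2 * dr k - 2 * di k))
      ((Ar k k * ((∑ j, Ar⁻¹ k j * dr j) ^ 2 + ∑ j, Ar⁻¹ k j * dr j) +
        Ai k k * ((∑ j, Ai⁻¹ k j * di j) ^ 2 - ∑ j, Ai⁻¹ k j * di j)) /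
          (se k - 2 * di k)))
      ((Ar k k * ((∑ j, Ar⁻¹ k j * dr j) ^ 2 - ∑ j, Ar⁻¹ k j * dr j) +
        Ai k k * ((∑ j, Ai⁻¹ k j * di j) ^ 2 + ∑ j, Ai⁻¹ k j * di j)) /
          (se k - 2 * dr k)))
    -- `β` is the maximum of the `m_k` over all rows
    (β : ℝ)
    (hβ : IsGreatest {x : ℝ | ∃ k, x = mr k ∨ x = mi k ∨ x = me k} β) :
    -- the weak approximation property holds with this `β`
    (∀ er ei ee : Fin n → ℝ,
      (∑ k, Ar k k * (er k - Pr k * ee k) ^ 2) +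
        (∑ k, Ai k k * (ei k - Pi k * ee k) ^ 2) ≤
        β * (Sum.elim (Sum.elim er ei) ee ⬝ᵥ A.mulVec (Sum.elim (Sum.elim er ei) ee))) ∧
    -- in particular, for any `β'`, weak diagonal dominance (with nonnegative
    -- diagonal) of `Q := β'A − LᵀD_F L` suffices for the inequality with `β'`
    (∀ β' : ℝ,
      (let L : Matrix (Fin n ⊕ Fin n) ((Fin n ⊕ Fin n) ⊕ Fin n) ℝ :=
        Matrix.fromCols (Matrix.fromBlocks 1 0 0 1)
          (Matrix.fromRows (-(Matrix.diagonal Pr)) (-(Matrix.diagonal Pi)));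
      let DF : Matrix (Fin n ⊕ Fin n) (Fin n ⊕ Fin n) ℝ :=
        Matrix.diagonal (Sum.elim (fun k => Ar k k) fun k => Ai k k);
      let Q : Matrix ((Fin n ⊕ Fin n) ⊕ Fin n) ((Fin n ⊕ Fin n) ⊕ Fin n) ℝ :=
        β' • A - Lᵀ * DF * L;
      (∀ k, 0 ≤ Q k k) ∧ ∀ k, ∑ j ∈ Finset.univ \ {k}, |Q k j| ≤ Q k k) →
      ∀ er ei ee : Fin n → ℝ,
        (∑ k, Ar k k * (er k - Pr k * ee k) ^ 2) +
          (∑ k, Ai k k * (ei k - Pi k * ee k) ^ 2) ≤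
          β' * (Sum.elim (Sum.elim er ei) ee ⬝ᵥ A.mulVec (Sum.elim (Sum.elim er ei) ee))) := by
  obtain ⟨hArD, hArZ, hArB⟩ := hArM
  obtain ⟨hAiD, hAiZ, hAiB⟩ := hAiM
  obtain ⟨-, hAeZ, -⟩ := hAeM
  have hA : A = arrowhead Ar Ai Ae dr di := by
    rw [hAdef, diagonal_transpose, diagonal_transpose]; rfl
  subst hA
  have hs := arrowhead_rowSum_pos hArZ hAiZ hAeZ (fun k => (hdr k).le) (fun k => (hdi k).le) hdd
  have hPr01 : ∀ k, Pr k ∈ Set.Icc 0 1 := fun k => hPr k ▸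
    neg_sum_inv_mul_mem_Icc hArU hArB (fun j => (hdr j).le) (fun j => (hs j).1.le) k
  have hPi01 : ∀ k, Pi k ∈ Set.Icc 0 1 := fun k => hPi k ▸
    neg_sum_inv_mul_mem_Icc hAiU hAiB (fun j => (hdi j).le) (fun j => (hs j).2.1.le) k
  have hSr : ∀ k, ∑ j, Ar⁻¹ k j * dr j = -Pr k := fun k => by rw [hPr, neg_neg]
  have hSi : ∀ k, ∑ j, Ai⁻¹ k j * di j = -Pi k := fun k => by rw [hPi, neg_neg]
  have hm : ∀ k, mr k ≤ β ∧ mi k ≤ β ∧ me k ≤ β := fun k =>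
    ⟨hβ.2 ⟨k, .inl rfl⟩, hβ.2 ⟨k, .inr (.inl rfl)⟩, hβ.2 ⟨k, .inr (.inr rfl)⟩⟩
  simp only [hmr, hmi, hme, hsr, hsi, hse, hSr, hSi, neg_sq, sub_neg_eq_add,
    ← sub_eq_add_neg] at hm
  refine ⟨weak_approximation_of_sum_abs_offDiag_le hApd.isHermitian ?_,
    fun β' h => weak_approximation_of_sum_abs_offDiag_le hApd.isHermitian h.2⟩
  rw [smul_arrowhead_sub_fineError_transpose_mul_diagonal_mul]
  refine arrowhead_sum_abs_offDiag_le (fun k => ?_) (fun k => ?_) (fun k => ?_)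
  · exact fine_row_sum_abs_offDiag_le (hArD k) (hArZ k) (hdr k) (hs k).1 (hPr01 k).1 (hm k).1
  · exact fine_row_sum_abs_offDiag_le (hAiD k) (hAiZ k) (hdi k) (hs k).2.1 (hPi01 k).1 (hm k).2.1
  · have hβ0 := (fine_bound_of_max_div_le (hArD k) (hdr k) (hs k).1 (hPr01 k).1 (hm k).1).1
    exact coarse_row_sum_abs_offDiag_le (hAeZ k) (hdr k) (hdi k) (hs k).2.2 (hArD k).le
      (hAiD k).le (hPr01 k) (hPi01 k) hβ0.le (hm k).2.2 rfl
end

section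
/- If the smoothing property holds with constant α₁ = 1/4 and the weak approximation property holds with constant β ≥ 1/4 for the PCTL two-level method, then the A-norm of the full symmetric two-grid error propagator E = G₂TG₁ satisfies ‖E‖_A = ‖G₂T‖_A² ≤ 1 − 1/(4β). -/
/-!
Write `G = 1 - M⁻¹A` and `T` for the coarse-grid correction. The pre-smoother `1 - M⁻ᵀA` is the
`A`-adjoint of `G` and `T` is an `A`-orthogonal projection, so `E = GTG₁ = (GT)(GT)^*`, and the
C⋆-identity gives `‖E‖_A = ‖GT‖_A²`; in coordinates this is the identity `‖XXᴴ‖ = ‖X‖²` for the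
spectral norm of `X = S(GT)S⁻¹`, where `SᵀS = A`. For the bound, `e = Tx` has `‖e‖_A ≤ ‖x‖_A` and
`Te = e`, so the weak approximation property gives `‖e‖_A² ≤ β ‖e‖_{AD⁻¹A}²` (`D = diag A`), and the smoothing
property then yields `‖Ge‖_A² ≤ (1 - 1/(4β)) ‖e‖_A²`.
-/

open Matrix
open scoped Matrix.Norms.L2Operator MatrixOrder

/-- The `A`-(energy-)norm of the linear operator given by matrix `B`:
`‖B‖_A = sup {‖Bx‖_A : ‖x‖_A = 1}`. -/
noncomputable def aOpNorm {n : ℕ} (A B : Matrix (Fin n) (Fin n) ℝ) : ℝ :=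
  sSup {r : ℝ | ∃ x : Fin n → ℝ, x ⬝ᵥ A.mulVec x = 1 ∧
    r = Real.sqrt (B.mulVec x ⬝ᵥ A.mulVec (B.mulVec x))}

variable {ι κ : Type*} [Fintype ι] [Fintype κ]

lemma dotProduct_mulVec_mulVec_self (A B : Matrix ι ι ℝ) (x : ι → ℝ) :
    (B *ᵥ x) ⬝ᵥ A *ᵥ (B *ᵥ x) = x ⬝ᵥ (Bᵀ * A * B) *ᵥ x := by
  rw [Matrix.mul_assoc, ← mulVec_mulVec, dotProduct_mulVec x, vecMul_transpose, mulVec_mulVec]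

lemma sqrt_dotProduct_transpose_mul_self_mulVec (S : Matrix ι ι ℝ) (x : ι → ℝ) :
    √(x ⬝ᵥ (Sᵀ * S) *ᵥ x) = ‖WithLp.toLp 2 (S *ᵥ x)‖ := by
  rw [← mulVec_mulVec, dotProduct_mulVec, vecMul_transpose, EuclideanSpace.norm_eq]
  simp [dotProduct, sq]

lemma Matrix.PosDef.exists_transpose_mul_self [DecidableEq ι] {A : Matrix ι ι ℝ}
    (hA : A.PosDef) : ∃ S : Matrix ι ι ℝ, Sᵀ * S = A ∧ IsUnit S.det := by
  obtain ⟨S, rfl⟩ := CStarAlgebra.nonneg_iff_eq_star_mul_self.mp hA.posSemidef.nonneg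
  refine ⟨S, rfl, isUnit_iff_ne_zero.mpr fun h => hA.det_pos.ne' ?_⟩
  rw [star_eq_conjTranspose, det_mul, h, mul_zero]

lemma conj_eq_transpose_conj_of_mul_eq [DecidableEq ι] {A S B C : Matrix ι ι ℝ}
    (hS : Sᵀ * S = A) (hSdet : IsUnit S.det) (hC : A * C = Bᵀ * A) :
    S * C * S⁻¹ = (S * B * S⁻¹)ᵀ := by
  have hSTdet : IsUnit Sᵀ.det := by rwa [det_transpose]
  calc S * C * S⁻¹ = Sᵀ⁻¹ * (Sᵀ * S * C) * S⁻¹ := by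
        rw [Matrix.mul_assoc Sᵀ, ← Matrix.mul_assoc Sᵀ⁻¹, nonsing_inv_mul _ hSTdet,
          Matrix.one_mul]
    _ = Sᵀ⁻¹ * Bᵀ * Sᵀ * (S * S⁻¹) := by rw [hS, hC, ← hS]; simp only [Matrix.mul_assoc]
    _ = (S * B * S⁻¹)ᵀ := by
        rw [mul_nonsing_inv S hSdet, Matrix.mul_one, transpose_mul, transpose_mul,
          transpose_nonsing_inv, Matrix.mul_assoc]

lemma aOpNorm_eq_l2_opNorm {n : ℕ} {A S : Matrix (Fin n) (Fin n) ℝ} (hS : Sᵀ * S = A)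
    (hSdet : IsUnit S.det) (B : Matrix (Fin n) (Fin n) ℝ) :
    aOpNorm A B = ‖S * B * S⁻¹‖ := by
  have hnorm (x : Fin n → ℝ) : √(x ⬝ᵥ A *ᵥ x) = ‖WithLp.toLp 2 (S *ᵥ x)‖ :=
    hS ▸ sqrt_dotProduct_transpose_mul_self_mulVec S x
  have hconj (x : Fin n → ℝ) : (S * B * S⁻¹) *ᵥ (S *ᵥ x) = S *ᵥ (B *ᵥ x) := by
    rw [mulVec_mulVec, Matrix.mul_assoc _ S⁻¹, nonsing_inv_mul S hSdet, Matrix.mul_one,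
      mulVec_mulVec]
  rw [← l2_opNorm_toEuclideanCLM, ← ContinuousLinearMap.sSup_sphere_eq_norm, aOpNorm]
  congr 1
  ext r
  simp only [Set.mem_ofPred_eq, Set.mem_image, mem_sphere_iff_norm, sub_zero]
  constructor
  · rintro ⟨x, hx, rfl⟩
    refine ⟨WithLp.toLp 2 (S *ᵥ x), ?_, ?_⟩
    · rw [← hnorm, hx, Real.sqrt_one]
    · rw [toEuclideanCLM_toLp, hconj, hnorm]
  · rintro ⟨y, hy, rfl⟩
    have hy' : S *ᵥ (S⁻¹ *ᵥ y.ofLp) = y.ofLp := by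
      rw [mulVec_mulVec, mul_nonsing_inv S hSdet, one_mulVec]
    refine ⟨S⁻¹ *ᵥ y.ofLp, ?_, ?_⟩
    · rw [← Real.sqrt_eq_one, hnorm, hy', WithLp.toLp_ofLp, hy]
    · rw [hnorm, ← hconj, hy']
      rfl

/-- The C⋆-identity for the `A`-norm: `A * C = Bᵀ * A` says that `C` is the `A`-adjoint of `B`. -/
lemma aOpNorm_mul_of_mul_eq_transpose_mul {n : ℕ} {A B C : Matrix (Fin n) (Fin n) ℝ}
    (hA : A.PosDef) (hC : A * C = Bᵀ * A) : aOpNorm A (B * C) = aOpNorm A B ^ 2 := by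
  obtain ⟨S, hS, hSdet⟩ := hA.exists_transpose_mul_self
  have hsplit : S * (B * C) * S⁻¹ = S * B * S⁻¹ * (S * C * S⁻¹) := by
    simp only [Matrix.mul_assoc, nonsing_inv_mul_cancel_left S _ hSdet]
  rw [aOpNorm_eq_l2_opNorm hS hSdet, aOpNorm_eq_l2_opNorm hS hSdet, hsplit,
    conj_eq_transpose_conj_of_mul_eq hS hSdet hC, ← conjTranspose_eq_transpose_of_trivial,
    ← l2_opNorm_conjTranspose (S * B * S⁻¹), sq, ← l2_opNorm_conjTranspose_mul_self,
    conjTranspose_conjTranspose]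

lemma sq_aOpNorm_le {n : ℕ} {A B : Matrix (Fin n) (Fin n) ℝ} {c : ℝ} (hc : 0 ≤ c)
    (h : ∀ x : Fin n → ℝ, x ⬝ᵥ A *ᵥ x = 1 → (B *ᵥ x) ⬝ᵥ A *ᵥ (B *ᵥ x) ≤ c) :
    aOpNorm A B ^ 2 ≤ c := by
  have hnonneg : 0 ≤ aOpNorm A B := Real.sSup_nonneg fun _ ⟨_, _, hr⟩ => hr ▸ Real.sqrt_nonneg _
  have hle : aOpNorm A B ≤ √c :=
    Real.sSup_le (fun _ ⟨x, hx, hr⟩ => hr ▸ Real.sqrt_le_sqrt (h x hx)) (Real.sqrt_nonneg c)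
  calc aOpNorm A B ^ 2 ≤ √c ^ 2 := pow_le_pow_left₀ hnonneg hle 2
    _ = c := Real.sq_sqrt hc

lemma isIdempotentElem_coarseCorrection [DecidableEq ι] [DecidableEq κ] {A : Matrix ι ι ℝ}
    (P : Matrix ι κ ℝ) (hP : IsUnit (Pᵀ * A * P).det) :
    IsIdempotentElem (1 - P * (Pᵀ * A * P)⁻¹ * Pᵀ * A) := by
  refine IsIdempotentElem.one_sub ?_
  calc P * (Pᵀ * A * P)⁻¹ * Pᵀ * A * (P * (Pᵀ * A * P)⁻¹ * Pᵀ * A)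
      = P * ((Pᵀ * A * P)⁻¹ * (Pᵀ * A * P)) * (Pᵀ * A * P)⁻¹ * Pᵀ * A := by
        simp only [Matrix.mul_assoc]
    _ = P * (Pᵀ * A * P)⁻¹ * Pᵀ * A := by rw [nonsing_inv_mul _ hP, Matrix.mul_one]

lemma mul_coarseCorrection [DecidableEq ι] [DecidableEq κ] {A : Matrix ι ι ℝ} (hA : Aᵀ = A)
    (P : Matrix ι κ ℝ) :
    A * (1 - P * (Pᵀ * A * P)⁻¹ * Pᵀ * A) = (1 - P * (Pᵀ * A * P)⁻¹ * Pᵀ * A)ᵀ * A := by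
  have hAc : (Pᵀ * A * P)⁻¹ᵀ = (Pᵀ * A * P)⁻¹ := by
    rw [transpose_nonsing_inv, transpose_mul, transpose_mul, hA, transpose_transpose,
      Matrix.mul_assoc]
  simp only [transpose_sub, transpose_one, transpose_mul, transpose_transpose, hA, hAc]
  simp only [Matrix.mul_sub, Matrix.sub_mul, Matrix.mul_one, Matrix.one_mul, Matrix.mul_assoc]

lemma mul_smoother_transpose [DecidableEq ι] {A : Matrix ι ι ℝ} (hA : Aᵀ = A)
    (M : Matrix ι ι ℝ) : A * (1 - Mᵀ⁻¹ * A) = (1 - M⁻¹ * A)ᵀ * A := by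
  simp only [transpose_sub, transpose_one, transpose_mul, transpose_nonsing_inv, hA,
    Matrix.mul_sub, Matrix.sub_mul, Matrix.mul_one, Matrix.one_mul, Matrix.mul_assoc]

lemma dotProduct_mulVec_projection_le [DecidableEq ι] {A T : Matrix ι ι ℝ} (hA : A.PosSemidef)
    (hT : IsIdempotentElem T) (hAT : A * T = Tᵀ * A) (x : ι → ℝ) :
    (T *ᵥ x) ⬝ᵥ A *ᵥ (T *ᵥ x) ≤ x ⬝ᵥ A *ᵥ x := by
  have hATT : Tᵀ * A * T = A * T := by rw [← hAT, Matrix.mul_assoc, hT.eq]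
  have hcompl : (1 - T)ᵀ * A * (1 - T) = A - A * T := by
    rw [transpose_sub, transpose_one, Matrix.sub_mul, Matrix.sub_mul, Matrix.mul_sub,
      Matrix.mul_sub, hATT, ← hAT]
    simp only [Matrix.one_mul, Matrix.mul_one]
    abel
  have hnonneg := hA.dotProduct_mulVec_nonneg ((1 - T) *ᵥ x)
  rw [star_trivial, dotProduct_mulVec_mulVec_self, hcompl] at hnonneg
  rw [dotProduct_mulVec_mulVec_self, hATT]
  simpa [sub_mulVec] using hnonneg

lemma one_sub_one_div_four_mul_nonneg {β : ℝ} (hβ : 1 / 4 ≤ β) : 0 ≤ 1 - 1 / (4 * β) := by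
  rw [sub_nonneg, div_le_one (by linarith)]
  linarith

/-- The scalar core of the two-grid bound: `a = ‖e‖_A²`, `q = ‖e‖_{AD⁻¹A}²`, `g = ‖Ge‖_A²`. -/
lemma le_one_sub_inv_of_smoothing_of_approx {a q g β : ℝ} (hβ : 1 / 4 ≤ β) (ha : a ≤ 1)
    (hsmooth : g ≤ a - 1 / 4 * q) (happrox : a ≤ β * q) : g ≤ 1 - 1 / (4 * β) := by
  have hβ0 : 0 < β := by linarith
  have hq : a / β ≤ q := (div_le_iff₀ hβ0).mpr (by linarith)
  calc g ≤ a - 1 / 4 * (a / β) := by linarith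
    _ = a * (1 - 1 / (4 * β)) := by field_simp
    _ ≤ 1 - 1 / (4 * β) := mul_le_of_le_one_left (one_sub_one_div_four_mul_nonneg hβ) ha

theorem pctl_two_grid_bound_general {n m : ℕ} (A M : Matrix (Fin n) (Fin n) ℝ)
    (P : Matrix (Fin n) (Fin m) ℝ) (hA : A.PosDef)
    (hP : (Pᵀ * A * P).PosDef) (β : ℝ) (hβ : 1 / 4 ≤ β)
    (hsmooth : ∀ e : Fin n → ℝ,
      ((1 - M⁻¹ * A).mulVec e) ⬝ᵥ A.mulVec ((1 - M⁻¹ * A).mulVec e) ≤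
        e ⬝ᵥ A.mulVec e -
          (1 / 4) * (((Matrix.diagonal fun i => A i i)⁻¹.mulVec (A.mulVec e)) ⬝ᵥ A.mulVec e))
    (happrox : ∀ e : Fin n → ℝ,
      ((1 - P * (Pᵀ * A * P)⁻¹ * Pᵀ * A).mulVec e) ⬝ᵥ
          A.mulVec ((1 - P * (Pᵀ * A * P)⁻¹ * Pᵀ * A).mulVec e) ≤
        β * (((Matrix.diagonal fun i => A i i)⁻¹.mulVec (A.mulVec e)) ⬝ᵥ A.mulVec e)) :
    aOpNorm A ((1 - M⁻¹ * A) * (1 - P * (Pᵀ * A * P)⁻¹ * Pᵀ * A) * (1 - (Mᵀ)⁻¹ * A)) =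
        (aOpNorm A ((1 - M⁻¹ * A) * (1 - P * (Pᵀ * A * P)⁻¹ * Pᵀ * A))) ^ 2 ∧
      aOpNorm A ((1 - M⁻¹ * A) * (1 - P * (Pᵀ * A * P)⁻¹ * Pᵀ * A) * (1 - (Mᵀ)⁻¹ * A)) ≤
        1 - 1 / (4 * β) := by
  set G := 1 - M⁻¹ * A
  set T := 1 - P * (Pᵀ * A * P)⁻¹ * Pᵀ * A
  have hAsym : Aᵀ = A := hA.isHermitian
  have hT : IsIdempotentElem T :=
    isIdempotentElem_coarseCorrection P (isUnit_iff_ne_zero.mpr hP.det_pos.ne')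
  have hAT : A * T = Tᵀ * A := mul_coarseCorrection hAsym P
  have hadj : A * (T * (1 - Mᵀ⁻¹ * A)) = (G * T)ᵀ * A := by
    rw [← Matrix.mul_assoc, hAT, Matrix.mul_assoc, mul_smoother_transpose hAsym,
      transpose_mul, Matrix.mul_assoc]
  have hnorm : aOpNorm A (G * T * (1 - Mᵀ⁻¹ * A)) = aOpNorm A (G * T) ^ 2 := by
    rw [← aOpNorm_mul_of_mul_eq_transpose_mul hA hadj, ← Matrix.mul_assoc (G * T),
      Matrix.mul_assoc G T T, hT.eq]
  refine ⟨hnorm, hnorm ▸ sq_aOpNorm_le (one_sub_one_div_four_mul_nonneg hβ) fun x hx => ?_⟩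
  have hTx : T *ᵥ (T *ᵥ x) = T *ᵥ x := by rw [mulVec_mulVec, hT.eq]
  have happ := happrox (T *ᵥ x)
  rw [hTx] at happ
  rw [← mulVec_mulVec]
  exact le_one_sub_inv_of_smoothing_of_approx hβ
    (hx ▸ dotProduct_mulVec_projection_le hA.posSemidef hT hAT x) (hsmooth _) happ

/-- if the smoothing property holds with `α₁ = 1/4` and the weak
approximation property holds with `β ≥ 1/4`, then the symmetric two-grid error
propagator `E = G₂TG₁` satisfies `‖E‖_A = ‖G₂T‖_A² ≤ 1 − 1/(4β)`. -/
theorem pctl_two_grid_bound {n m : ℕ} (A M : Matrix (Fin n) (Fin n) ℝ)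
    (P : Matrix (Fin n) (Fin m) ℝ) (hA : A.PosDef) (hM : IsUnit M)
    (hP : (Pᵀ * A * P).PosDef) (β : ℝ) (hβ : 1 / 4 ≤ β)
    (hsmooth : ∀ e : Fin n → ℝ,
      ((1 - M⁻¹ * A).mulVec e) ⬝ᵥ A.mulVec ((1 - M⁻¹ * A).mulVec e) ≤
        e ⬝ᵥ A.mulVec e -
          (1 / 4) * (((Matrix.diagonal fun i => A i i)⁻¹.mulVec (A.mulVec e)) ⬝ᵥ A.mulVec e))
    (happrox : ∀ e : Fin n → ℝ,
      ((1 - P * (Pᵀ * A * P)⁻¹ * Pᵀ * A).mulVec e) ⬝ᵥ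
          A.mulVec ((1 - P * (Pᵀ * A * P)⁻¹ * Pᵀ * A).mulVec e) ≤
        β * (((Matrix.diagonal fun i => A i i)⁻¹.mulVec (A.mulVec e)) ⬝ᵥ A.mulVec e)) :
    aOpNorm A ((1 - M⁻¹ * A) * (1 - P * (Pᵀ * A * P)⁻¹ * Pᵀ * A) * (1 - (Mᵀ)⁻¹ * A)) =
        (aOpNorm A ((1 - M⁻¹ * A) * (1 - P * (Pᵀ * A * P)⁻¹ * Pᵀ * A))) ^ 2 ∧
      aOpNorm A ((1 - M⁻¹ * A) * (1 - P * (Pᵀ * A * P)⁻¹ * Pᵀ * A) * (1 - (Mᵀ)⁻¹ * A)) ≤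
        1 - 1 / (4 * β) :=
  pctl_two_grid_bound_general A M P hA hP β hβ hsmooth happrox
end
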